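/- arXiv:1301.1001 — 17 statements merged into one kernel-verified Lean document; each statement's English description precedes it below -/
import Mathlib

section
/- For any nonzero vectors x and y in a real normed linear space X, ‖x+y‖ ≤ ‖x‖ + ‖y‖ − (‖x‖/‖y‖ + ‖y‖/‖x‖ − ‖x/‖y‖ + y/‖x‖‖) · min{‖x‖, ‖y‖}. -/
private lemma aux_maligranda {X : Type*} [NormedAddCommGroup X] [NormedSpace ℝ X]
    (x y : X) (ha : 0 < ‖x‖) (hb : 0 < ‖y‖) (hab : ‖x‖ ≤ ‖y‖) :
    ‖x + y‖ ≤ ‖x‖ + ‖y‖ -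
      (‖x‖ / ‖y‖ + ‖y‖ / ‖x‖ - ‖(1 / ‖y‖) • x + (1 / ‖x‖) • y‖) * ‖x‖ := by
  set a := ‖x‖
  set b := ‖y‖
  have h1 : x + y = (1 - a / b) • x + ((a / b) • x + y) := by
    have h : (1 - a / b) + a / b = 1 := by ring
    rw [← add_assoc, ← add_smul, h, one_smul]
  have h2 : a * ‖(1 / b) • x + (1 / a) • y‖ = ‖(a / b) • x + y‖ := by
    have h : a • ((1 / b) • x + (1 / a) • y) = (a / b) • x + y := by
      rw [smul_add, smul_smul, smul_smul, mul_one_div, mul_one_div, div_self ha.ne',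
        one_smul]
    rw [← h, norm_smul, Real.norm_of_nonneg ha.le]
  have hnn : 0 ≤ 1 - a / b := sub_nonneg.mpr ((div_le_one hb).mpr hab)
  have hba : b / a * a = b := div_mul_cancel₀ b ha.ne'
  calc ‖x + y‖ = ‖(1 - a / b) • x + ((a / b) • x + y)‖ := by rw [← h1]
    _ ≤ ‖(1 - a / b) • x‖ + ‖(a / b) • x + y‖ := norm_add_le _ _
    _ = (1 - a / b) * a + a * ‖(1 / b) • x + (1 / a) • y‖ := by
        rw [norm_smul, Real.norm_of_nonneg hnn, h2]
    _ = a + b - (a / b + b / a - ‖(1 / b) • x + (1 / a) • y‖) * a := by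
        field_simp; ring

theorem stmt_0 {X : Type*} [NormedAddCommGroup X] [NormedSpace ℝ X]
    (x y : X) (hx : x ≠ 0) (hy : y ≠ 0) :
    ‖x + y‖ ≤ ‖x‖ + ‖y‖ -
      (‖x‖ / ‖y‖ + ‖y‖ / ‖x‖ - ‖(1 / ‖y‖) • x + (1 / ‖x‖) • y‖) * min ‖x‖ ‖y‖ := by
  have ha : 0 < ‖x‖ := norm_pos_iff.mpr hx
  have hb : 0 < ‖y‖ := norm_pos_iff.mpr hy
  rcases le_total ‖x‖ ‖y‖ with h | h
  · rw [min_eq_left h]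
    exact aux_maligranda x y ha hb h
  · rw [min_eq_right h]
    have := aux_maligranda y x hb ha h
    rw [add_comm y x, add_comm (‖y‖ / ‖x‖), add_comm ((1 / ‖x‖) • y)] at this
    linarith [this]
end

section
/- For any nonzero vectors x and y in a real normed linear space X, ‖x+y‖ ≥ ‖x‖ + ‖y‖ − (‖x‖/‖y‖ + ‖y‖/‖x‖ − ‖x/‖y‖ + y/‖x‖‖) · max{‖x‖, ‖y‖}. -/
lemma aux_stmt_1 {X : Type*} [NormedAddCommGroup X] [NormedSpace ℝ X]
    (x y : X) (hx : x ≠ 0) (hy : y ≠ 0) (hle : ‖x‖ ≤ ‖y‖) :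
    ‖x + y‖ ≥ ‖x‖ + ‖y‖ -
      (‖x‖ / ‖y‖ + ‖y‖ / ‖x‖ - ‖(1 / ‖y‖) • x + (1 / ‖x‖) • y‖) * ‖y‖ := by
  have ha : (0:ℝ) < ‖x‖ := norm_pos_iff.mpr hx
  have hb : (0:ℝ) < ‖y‖ := norm_pos_iff.mpr hy
  have hsm : (‖y‖ : ℝ) • ((1 / ‖y‖) • x + (1 / ‖x‖) • y) = (x + y) + ((‖y‖/‖x‖ - 1)) • y := by
    rw [smul_add, smul_smul, smul_smul, mul_one_div, div_self hb.ne', one_smul, mul_one_div,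
      sub_smul, one_smul]
    abel
  have key : ‖y‖ * ‖(1 / ‖y‖) • x + (1 / ‖x‖) • y‖ ≤ ‖x + y‖ + (‖y‖/‖x‖ - 1) * ‖y‖ := by
    have h1 : ‖(‖y‖ : ℝ) • ((1 / ‖y‖) • x + (1 / ‖x‖) • y)‖
        ≤ ‖x + y‖ + (‖y‖/‖x‖ - 1) * ‖y‖ := by
      rw [hsm]
      refine (norm_add_le _ _).trans ?_
      gcongr
      rw [norm_smul, Real.norm_eq_abs, abs_of_nonneg]
      have : (1:ℝ) ≤ ‖y‖/‖x‖ := (one_le_div ha).mpr hle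
      linarith
    rwa [norm_smul, Real.norm_eq_abs, abs_of_pos hb] at h1
  have e1 : ‖x‖ / ‖y‖ * ‖y‖ = ‖x‖ := div_mul_cancel₀ _ hb.ne'
  nlinarith [key, e1]

theorem stmt_1 {X : Type*} [NormedAddCommGroup X] [NormedSpace ℝ X]
    (x y : X) (hx : x ≠ 0) (hy : y ≠ 0) :
    ‖x + y‖ ≥ ‖x‖ + ‖y‖ -
      (‖x‖ / ‖y‖ + ‖y‖ / ‖x‖ - ‖(1 / ‖y‖) • x + (1 / ‖x‖) • y‖) * max ‖x‖ ‖y‖ := by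
  rcases le_total ‖x‖ ‖y‖ with h | h
  · rw [max_eq_right h]
    exact aux_stmt_1 x y hx hy h
  · rw [max_eq_left h]
    have := aux_stmt_1 y x hy hx h
    rw [add_comm y x, add_comm ((1 / ‖x‖) • y) ((1 / ‖y‖) • x)] at this
    linarith
end

section
/- For any nonzero vectors x and y in a real normed linear space, the skew-angular distance β[x,y] = ‖x/‖y‖ − y/‖x‖‖ satisfies β[x,y] ≤ ‖x−y‖/max{‖x‖,‖y‖} + |‖x‖−‖y‖|/min{‖x‖,‖y‖}. -/
theorem stmt_3 {X : Type*} [NormedAddCommGroup X] [NormedSpace ℝ X]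
    (x y : X) (hx : x ≠ 0) (hy : y ≠ 0) :
    ‖(1 / ‖y‖) • x - (1 / ‖x‖) • y‖ ≤
      ‖x - y‖ / max ‖x‖ ‖y‖ + |‖x‖ - ‖y‖| / min ‖x‖ ‖y‖ := by
  wlog h : ‖x‖ ≤ ‖y‖ with H
  · have := H y x hy hx (le_of_not_ge h)
    rw [norm_sub_rev, norm_sub_rev y x, max_comm, min_comm, abs_sub_comm ‖y‖ ‖x‖] at this
    exact this
  have ha : (0:ℝ) < ‖x‖ := norm_pos_iff.mpr hx
  have hb : (0:ℝ) < ‖y‖ := norm_pos_iff.mpr hy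
  rw [max_eq_right h, min_eq_left h]
  have key : (1 / ‖y‖) • x - (1 / ‖x‖) • y
      = (1 / ‖y‖) • (x - y) + (1 / ‖y‖ - 1 / ‖x‖) • y := by
    rw [smul_sub, sub_smul]; abel
  rw [key]
  calc ‖(1 / ‖y‖) • (x - y) + (1 / ‖y‖ - 1 / ‖x‖) • y‖
      ≤ ‖(1 / ‖y‖) • (x - y)‖ + ‖(1 / ‖y‖ - 1 / ‖x‖) • y‖ := norm_add_le _ _
    _ = ‖x - y‖ / ‖y‖ + |1 / ‖y‖ - 1 / ‖x‖| * ‖y‖ := by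
        rw [norm_smul, norm_smul, Real.norm_eq_abs, Real.norm_eq_abs,
          abs_of_pos (by positivity : (0:ℝ) < 1 / ‖y‖)]
        ring
    _ = ‖x - y‖ / ‖y‖ + |‖x‖ - ‖y‖| / ‖x‖ := by
        rw [abs_of_nonpos (by
          have : 1 / ‖y‖ ≤ 1 / ‖x‖ := by
            apply one_div_le_one_div_of_le ha h
          linarith), abs_of_nonpos (by linarith : ‖x‖ - ‖y‖ ≤ 0)]
        field_simp
end

section
/- For any nonzero vectors x and y in a real normed linear space, the skew-angular distance β[x,y] = ‖x/‖y‖ − y/‖x‖‖ satisfies β[x,y] ≥ ‖x−y‖/min{‖x‖,‖y‖} − |‖x‖−‖y‖|/max{‖x‖,‖y‖}. -/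
theorem stmt_4 {X : Type*} [NormedAddCommGroup X] [NormedSpace ℝ X]
    (x y : X) (hx : x ≠ 0) (hy : y ≠ 0) :
    ‖x - y‖ / min ‖x‖ ‖y‖ - |‖x‖ - ‖y‖| / max ‖x‖ ‖y‖ ≤
      ‖(1 / ‖y‖) • x - (1 / ‖x‖) • y‖ := by
  have hx' : (0:ℝ) < ‖x‖ := norm_pos_iff.mpr hx
  have hy' : (0:ℝ) < ‖y‖ := norm_pos_iff.mpr hy
  wlog h : ‖y‖ ≤ ‖x‖ with H
  · have := H y x hy hx hy' hx' (le_of_lt (not_le.mp h))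
    rw [min_comm, max_comm, abs_sub_comm, norm_sub_rev ((1/‖y‖) • x), norm_sub_rev x y]
    exact this
  have hmin : min ‖x‖ ‖y‖ = ‖y‖ := min_eq_right h
  have hmax : max ‖x‖ ‖y‖ = ‖x‖ := max_eq_left h
  rw [hmin, hmax, abs_of_nonneg (sub_nonneg.mpr h)]
  have key : (1/‖y‖) • (x - y) = ((1/‖y‖) • x - (1/‖x‖) • y) + (1/‖x‖ - 1/‖y‖) • y := by
    rw [smul_sub, sub_smul]; abel
  have hle : 1/‖x‖ ≤ 1/‖y‖ := one_div_le_one_div_of_le hy' h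
  have h1 : ‖x - y‖ / ‖y‖ ≤ ‖(1/‖y‖) • x - (1/‖x‖) • y‖ + (1/‖y‖ - 1/‖x‖) * ‖y‖ := by
    have h2 := norm_add_le ((1/‖y‖) • x - (1/‖x‖) • y) ((1/‖x‖ - 1/‖y‖) • y)
    rw [← key, norm_smul, norm_smul, Real.norm_eq_abs, Real.norm_eq_abs,
      abs_of_nonneg (by positivity : (0:ℝ) ≤ 1/‖y‖),
      abs_of_nonpos (by linarith : 1/‖x‖ - 1/‖y‖ ≤ 0)] at h2
    calc ‖x - y‖ / ‖y‖ = 1/‖y‖ * ‖x - y‖ := by ring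
    _ ≤ _ := by linarith
  have h3 : (1/‖y‖ - 1/‖x‖) * ‖y‖ = (‖x‖ - ‖y‖) / ‖x‖ := by
    field_simp
  linarith
end

section
/- For any nonzero vectors x and y in a real normed linear space, the skew-angular distance satisfies β[x,y] ≤ (1/‖x‖ + 1/‖y‖)·‖x−y‖. -/
theorem stmt_5 {X : Type*} [NormedAddCommGroup X] [NormedSpace ℝ X]
    (x y : X) (hx : x ≠ 0) (hy : y ≠ 0) :
    ‖(1 / ‖y‖) • x - (1 / ‖x‖) • y‖ ≤ (1 / ‖x‖ + 1 / ‖y‖) * ‖x - y‖ := by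
  have hxn : (0:ℝ) < ‖x‖ := norm_pos_iff.mpr hx
  have hyn : (0:ℝ) < ‖y‖ := norm_pos_iff.mpr hy
  have key : (1 / ‖y‖) • x - (1 / ‖x‖) • y
      = (1 / ‖y‖) • (x - y) + (1 / ‖y‖ - 1 / ‖x‖) • y := by
    simp [smul_sub, sub_smul]
  have hstep : |1 / ‖y‖ - 1 / ‖x‖| * ‖y‖ ≤ 1 / ‖x‖ * ‖x - y‖ := by
    have h1 : |1 / ‖y‖ - 1 / ‖x‖| * ‖y‖ = |‖x‖ - ‖y‖| / ‖x‖ := by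
      rw [div_sub_div _ _ (ne_of_gt hyn) (ne_of_gt hxn), abs_div, abs_mul,
        abs_of_pos hxn, abs_of_pos hyn]
      field_simp
    rw [h1]
    have h2 : |‖x‖ - ‖y‖| ≤ ‖x - y‖ := abs_norm_sub_norm_le x y
    calc |‖x‖ - ‖y‖| / ‖x‖ ≤ ‖x - y‖ / ‖x‖ := by gcongr
      _ = 1 / ‖x‖ * ‖x - y‖ := by ring
  rw [key]
  calc ‖(1 / ‖y‖) • (x - y) + (1 / ‖y‖ - 1 / ‖x‖) • y‖
      ≤ ‖(1 / ‖y‖) • (x - y)‖ + ‖(1 / ‖y‖ - 1 / ‖x‖) • y‖ := norm_add_le _ _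
    _ = (1 / ‖y‖) * ‖x - y‖ + |1 / ‖y‖ - 1 / ‖x‖| * ‖y‖ := by
        rw [norm_smul, norm_smul, Real.norm_eq_abs, Real.norm_eq_abs,
          abs_of_pos (by positivity)]
    _ ≤ (1 / ‖y‖) * ‖x - y‖ + (1 / ‖x‖) * ‖x - y‖ := by linarith
    _ = (1 / ‖x‖ + 1 / ‖y‖) * ‖x - y‖ := by ring
end

section
/- The constant 1 in the inequality β[x,y] ≤ C·(1/‖x‖ + 1/‖y‖)·‖x−y‖ is best possible in ℝ: with x = −1 and y = ε > 0 (so β[x,y] = ε + 1/ε), the ratio β[x,y]·‖x‖‖y‖/((‖x‖+‖y‖)·‖x−y‖) = (1+ε²)/(1+ε)² tends to 1 as ε → 0⁺. -/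
theorem stmt_6 :
    (∀ ε : ℝ, 0 < ε →
      (abs ((-1 : ℝ) / abs ε - ε / abs (-1 : ℝ))) * abs (-1 : ℝ) * abs ε /
        ((abs (-1 : ℝ) + abs ε) * abs ((-1 : ℝ) - ε)) = (1 + ε ^ 2) / (1 + ε) ^ 2) ∧
    Filter.Tendsto (fun ε : ℝ => (1 + ε ^ 2) / (1 + ε) ^ 2)
      (nhdsWithin 0 (Set.Ioi 0)) (nhds 1) := by
  constructor
  · intro ε hε
    have h1 : abs ε = ε := abs_of_pos hε
    have h2 : abs ((-1 : ℝ) - ε) = 1 + ε := by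
      rw [abs_of_nonpos (by linarith)]; ring
    rw [h1, h2, abs_neg, abs_one, div_one]
    rw [abs_of_nonpos (by
      have : (0:ℝ) < 1/ε := by positivity
      have : (-1 : ℝ)/ε = -(1/ε) := by ring
      nlinarith)]
    field_simp
    ring
  · have hc : ContinuousAt (fun ε : ℝ => (1 + ε ^ 2) / (1 + ε) ^ 2) 0 := by
      apply ContinuousAt.div (by fun_prop) (by fun_prop)
      norm_num
    have h0 : (fun ε : ℝ => (1 + ε ^ 2) / (1 + ε) ^ 2) 0 = 1 := by norm_num
    have := (hc.continuousWithinAt (s := Set.Ioi 0)).tendsto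
    norm_num at this; exact this
end

section
/- In ℝ² with the ℓ¹-norm ‖(a,b)‖ = |a|+|b|, taking x = (3/4, 3/4) and y = (−1, 0), one has 2 − ‖x/‖x‖ + y/‖y‖‖ = 1 < 4/3 = ‖x‖/‖y‖ + ‖y‖/‖x‖ − ‖x/‖y‖ + y/‖x‖‖, showing that the new correction term can be strictly larger than Maligranda's correction term. -/
lemma WithLp.prod_norm_toLp_of_L1 {α β : Type*} [SeminormedAddCommGroup α]
    [SeminormedAddCommGroup β] (a : α) (b : β) :
    ‖WithLp.toLp 1 (a, b)‖ = ‖a‖ + ‖b‖ :=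
  WithLp.prod_norm_eq_of_L1 _

theorem stmt_8 :
    let x : WithLp 1 (ℝ × ℝ) := (WithLp.equiv 1 (ℝ × ℝ)).symm (3/4, 3/4)
    let y : WithLp 1 (ℝ × ℝ) := (WithLp.equiv 1 (ℝ × ℝ)).symm (-1, 0)
    2 - ‖(1 / ‖x‖) • x + (1 / ‖y‖) • y‖ = 1 ∧
    ‖x‖ / ‖y‖ + ‖y‖ / ‖x‖ - ‖(1 / ‖y‖) • x + (1 / ‖x‖) • y‖ = 4 / 3 ∧
    (1 : ℝ) < 4 / 3 := by
  intro x y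
  have hx : ‖x‖ = 3 / 2 := by norm_num [x, WithLp.prod_norm_toLp_of_L1]
  have hy : ‖y‖ = 1 := by norm_num [y, WithLp.prod_norm_toLp_of_L1]
  have hu : (1 / ‖x‖) • x + (1 / ‖y‖) • y = WithLp.toLp 1 ((-1/2 : ℝ), (1/2 : ℝ)) := by
    rw [hx, hy]
    apply WithLp.ofLp_injective
    ext <;> norm_num [x, y]
  have hv : (1 / ‖y‖) • x + (1 / ‖x‖) • y = WithLp.toLp 1 ((1/12 : ℝ), (3/4 : ℝ)) := by
    rw [hx, hy]
    apply WithLp.ofLp_injective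
    ext <;> norm_num [x, y]
  rw [hu, hv, hx, hy, WithLp.prod_norm_toLp_of_L1, WithLp.prod_norm_toLp_of_L1]
  norm_num
end

section
/- In a real inner product space, for any nonzero vectors x and y, ‖x/‖y‖ − y/‖x‖‖² − ‖x/‖x‖ − y/‖y‖‖² = (‖x‖/‖y‖ − ‖y‖/‖x‖)². -/
theorem stmt_9 {X : Type*} [NormedAddCommGroup X] [InnerProductSpace ℝ X]
    (x y : X) (hx : x ≠ 0) (hy : y ≠ 0) :
    ‖(1 / ‖y‖) • x - (1 / ‖x‖) • y‖ ^ 2 - ‖(1 / ‖x‖) • x - (1 / ‖y‖) • y‖ ^ 2 =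
      (‖x‖ / ‖y‖ - ‖y‖ / ‖x‖) ^ 2 := by
  have hx' : ‖x‖ ≠ 0 := norm_ne_zero_iff.mpr hx
  have hy' : ‖y‖ ≠ 0 := norm_ne_zero_iff.mpr hy
  rw [@norm_sub_sq_real, @norm_sub_sq_real]
  simp only [inner_smul_left, inner_smul_right, norm_smul, real_inner_self_eq_norm_sq,
    Real.norm_eq_abs, conj_trivial, mul_pow, abs_div, abs_one, abs_norm]
  field_simp
  ring
end

section
/- In a real inner product space, for any nonzero vectors x and y, the angular distance is at most the skew-angular distance: ‖x/‖x‖ − y/‖y‖‖ ≤ ‖x/‖y‖ − y/‖x‖‖. -/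
theorem stmt_10 {X : Type*} [NormedAddCommGroup X] [InnerProductSpace ℝ X]
    (x y : X) (hx : x ≠ 0) (hy : y ≠ 0) :
    ‖(1 / ‖x‖) • x - (1 / ‖y‖) • y‖ ≤ ‖(1 / ‖y‖) • x - (1 / ‖x‖) • y‖ := by
  have ha : (0:ℝ) < ‖x‖ := norm_pos_iff.mpr hx
  have hb : (0:ℝ) < ‖y‖ := norm_pos_iff.mpr hy
  have hsq : ‖(1 / ‖x‖) • x - (1 / ‖y‖) • y‖ ^ 2 ≤ ‖(1 / ‖y‖) • x - (1 / ‖x‖) • y‖ ^ 2 := by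
    rw [@norm_sub_sq_real, @norm_sub_sq_real]
    simp only [real_inner_smul_left, real_inner_smul_right, norm_smul, Real.norm_eq_abs]
    rw [abs_of_pos (by positivity : (0:ℝ) < 1 / ‖x‖),
        abs_of_pos (by positivity : (0:ℝ) < 1 / ‖y‖)]
    have h1 : (1 / ‖x‖ * ‖x‖ : ℝ) = 1 := by field_simp
    have h2 : (1 / ‖y‖ * ‖y‖ : ℝ) = 1 := by field_simp
    have key : (2:ℝ) ≤ (1 / ‖y‖ * ‖x‖) ^ 2 + (1 / ‖x‖ * ‖y‖) ^ 2 := by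
      rw [div_mul_eq_mul_div, div_mul_eq_mul_div, one_mul, one_mul, div_pow, div_pow]
      rw [div_add_div _ _ (by positivity) (by positivity), le_div_iff₀ (by positivity)]
      nlinarith [sq_nonneg (‖x‖^2 - ‖y‖^2)]
    nlinarith [key]
  nlinarith [hsq, norm_nonneg ((1 / ‖x‖) • x - (1 / ‖y‖) • y), norm_nonneg ((1 / ‖y‖) • x - (1 / ‖x‖) • y)]
end

section
/- Let X be a real normed linear space such that for all nonzero x, y ∈ X, ‖x/‖x‖ − y/‖y‖‖ ≤ ‖x/‖y‖ − y/‖x‖‖. Then for all x, y ∈ X with ‖x‖ = ‖y‖ and all nonzero real γ, ‖x + y‖ ≤ ‖γx + γ⁻¹y‖. -/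
theorem stmt_11 {X : Type*} [NormedAddCommGroup X] [NormedSpace ℝ X]
    (h : ∀ x y : X, x ≠ 0 → y ≠ 0 →
      ‖(1 / ‖x‖) • x - (1 / ‖y‖) • y‖ ≤ ‖(1 / ‖y‖) • x - (1 / ‖x‖) • y‖) :
    ∀ x y : X, ‖x‖ = ‖y‖ → ∀ γ : ℝ, γ ≠ 0 → ‖x + y‖ ≤ ‖γ • x + γ⁻¹ • y‖ := by
  intro x y hxy γ hγ
  rcases eq_or_ne x 0 with rfl | hx
  · have hy : y = 0 := norm_eq_zero.mp (by simpa using hxy.symm)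
    simp [hy]
  have hy : y ≠ 0 := fun h0 => hx (norm_eq_zero.mp (by rw [hxy, h0, norm_zero]))
  have hr : 0 < ‖x‖ := norm_pos_iff.mpr hx
  have key : ∀ δ : ℝ, 0 < δ → ‖x + y‖ ≤ ‖δ • x + δ⁻¹ • y‖ := by
    intro δ hδ
    have hδi : 0 < δ⁻¹ := inv_pos.mpr hδ
    have hb : (-δ⁻¹) • y ≠ 0 := smul_ne_zero (neg_ne_zero.mpr (ne_of_gt hδi)) hy
    have H := h x ((-δ⁻¹) • y) hx hb
    have hnb : ‖(-δ⁻¹) • y‖ = δ⁻¹ * ‖x‖ := by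
      rw [norm_smul, ← hxy, Real.norm_eq_abs, abs_neg, abs_of_pos hδi]
    rw [hnb] at H
    have hxne : ‖x‖ ≠ 0 := ne_of_gt hr
    have hδne : δ ≠ 0 := ne_of_gt hδ
    have e1 : (1/‖x‖) • x - (1/(δ⁻¹*‖x‖)) • ((-δ⁻¹) • y) = ‖x‖⁻¹ • (x + y) := by
      match_scalars <;> (field_simp; try ring)
    have e2 : (1/(δ⁻¹*‖x‖)) • x - (1/‖x‖) • ((-δ⁻¹) • y) = ‖x‖⁻¹ • (δ • x + δ⁻¹ • y) := by
      match_scalars <;> (field_simp; try ring)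
    rw [e1, e2, norm_smul, norm_smul] at H
    exact le_of_mul_le_mul_left H (norm_pos_iff.mpr (inv_ne_zero hxne))
  rcases hγ.lt_or_gt with hneg | hpos
  · have := key (-γ) (by linarith)
    have heq : (-γ) • x + (-γ)⁻¹ • y = -(γ • x + γ⁻¹ • y) := by
      rw [inv_neg]; module
    rw [heq, norm_neg] at this
    exact this
  · exact key γ hpos
end

section
/- Let X be a real normed linear space. If for all nonzero x, y ∈ X the angular distance is at most the skew-angular distance, i.e., ‖x/‖x‖ − y/‖y‖‖ ≤ ‖x/‖y‖ − y/‖x‖‖, then X is an inner product space (the norm satisfies the parallelogram law). -/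
/-!
Putting `x = √a • e` and `y = -(√b • f)` into the hypothesis gives Lorch's inequality
`√(ab) ‖e + f‖ ≤ ‖a • e + b • f‖` for `‖e‖ = ‖f‖`. Let `p = ‖α • e + β • f‖` and
`q = ‖β • e + α • f‖` with `α, β > 0`. Lorch's inequality for `(e, f)` bounds
`‖q • (α • e + β • f) + p • (β • e + α • f)‖` from below, and for the equal-norm pair
`(q • (α • e + β • f), p • (β • e + α • f))` it bounds it from above. Together they give
`αβ (p - q)² ≤ 0`, which is Ficken's condition: `‖α • e + β • f‖ = ‖β • e + α • f‖`
whenever `‖e‖ = ‖f‖`.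

Write `s • u + t • v` as a combination of `u + v` and `u - v`. Then Ficken's condition shows
that isosceles orthogonality `‖u + v‖ = ‖u - v‖` is homogeneous. On the span of two isosceles
orthogonal unit vectors `e, z` the norm is therefore Euclidean: the vectors
`(1 - t²) • e + 2t • z` have norm `1 + t²`, and they point in every direction except `-e`.
Finally, `x` and `y` are multiples of `u + v` and `u - v` for the isosceles orthogonal pair
`u, v = ‖y‖ • x ± ‖x‖ • y`.
-/

section

variable {X : Type*} [NormedAddCommGroup X] [NormedSpace ℝ X]

/-- Lorch's condition `‖e + f‖ ≤ ‖γ • e + γ⁻¹ • f‖` for `‖e‖ = ‖f‖` and `γ > 0`, in homogeneous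
squared form (`γ = √(a / b)`). -/
def LorchCondition (X : Type*) [NormedAddCommGroup X] [NormedSpace ℝ X] : Prop :=
  ∀ e f : X, ‖e‖ = ‖f‖ → ∀ a b : ℝ, 0 < a → 0 < b →
    a * b * ‖e + f‖ ^ 2 ≤ ‖a • e + b • f‖ ^ 2

theorem lorchCondition_of_angular_le_skewAngular
    (h : ∀ x y : X, x ≠ 0 → y ≠ 0 →
      ‖(1 / ‖x‖) • x - (1 / ‖y‖) • y‖ ≤ ‖(1 / ‖y‖) • x - (1 / ‖x‖) • y‖) :
    LorchCondition X := by
  intro e f hef a b ha hb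
  rcases eq_or_ne e 0 with rfl | he
  · obtain rfl : f = 0 := norm_eq_zero.1 (by rw [← hef, norm_zero])
    simp
  obtain ⟨c, hc, rfl⟩ : ∃ c, 0 < c ∧ c ^ 2 = a := ⟨√a, Real.sqrt_pos.2 ha, Real.sq_sqrt ha.le⟩
  obtain ⟨d, hd, rfl⟩ : ∃ d, 0 < d ∧ d ^ 2 = b := ⟨√b, Real.sqrt_pos.2 hb, Real.sq_sqrt hb.le⟩
  have hr : 0 < ‖e‖ := norm_pos_iff.2 he
  have hf : f ≠ 0 := norm_pos_iff.1 (hef ▸ hr)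
  have key := h (c • e) (-(d • f)) (smul_ne_zero hc.ne' he)
    (neg_ne_zero.2 (smul_ne_zero hd.ne' hf))
  rw [norm_neg, norm_smul, norm_smul, Real.norm_of_nonneg hc.le, Real.norm_of_nonneg hd.le,
    ← hef] at key
  have angular : (1 / (c * ‖e‖)) • (c • e) - (1 / (d * ‖e‖)) • -(d • f) = ‖e‖⁻¹ • (e + f) := by
    match_scalars <;> field_simp
  have skew : (1 / (d * ‖e‖)) • (c • e) - (1 / (c * ‖e‖)) • -(d • f)
      = ‖e‖⁻¹ • (c * d)⁻¹ • (c ^ 2 • e + d ^ 2 • f) := by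
    match_scalars <;> field_simp
  rw [angular, skew, norm_smul, norm_smul ‖e‖⁻¹, norm_smul, Real.norm_of_nonneg (by positivity),
    Real.norm_of_nonneg (by positivity)] at key
  have hcd : c * d * ‖e + f‖ ≤ ‖c ^ 2 • e + d ^ 2 • f‖ :=
    (le_inv_mul_iff₀ (by positivity)).1 (le_of_mul_le_mul_left key (inv_pos.2 hr))
  calc c ^ 2 * d ^ 2 * ‖e + f‖ ^ 2 = (c * d * ‖e + f‖) ^ 2 := by ring
    _ ≤ _ := pow_le_pow_left₀ (by positivity) hcd 2

theorem smul_add_smul_ne_zero_of_norm_eq {e f : X} (hef : ‖e‖ = ‖f‖) (he : e ≠ 0) {α β : ℝ}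
    (hα : 0 ≤ α) (hβ : 0 ≤ β) (hαβ : α ≠ β) : α • e + β • f ≠ 0 := by
  intro h0
  have := congrArg norm (eq_neg_of_add_eq_zero_left h0)
  rw [norm_neg, norm_smul, norm_smul, Real.norm_of_nonneg hα, Real.norm_of_nonneg hβ, ← hef]
    at this
  exact hαβ (mul_right_cancel₀ (norm_ne_zero_iff.2 he) this)

namespace LorchCondition

theorem norm_smul_add_smul_comm_of_pos (hL : LorchCondition X) {e f : X} (hef : ‖e‖ = ‖f‖)
    {α β : ℝ} (hα : 0 < α) (hβ : 0 < β) : ‖α • e + β • f‖ = ‖β • e + α • f‖ := by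
  rcases eq_or_ne (e + f) 0 with hsum | hsum
  · obtain rfl : f = -e := eq_neg_of_add_eq_zero_right hsum
    rw [smul_neg, smul_neg, ← sub_eq_add_neg, ← sub_eq_add_neg, ← sub_smul, ← sub_smul,
      norm_smul, norm_smul, norm_sub_rev]
  rcases eq_or_ne α β with rfl | hαβ
  · rfl
  have he : e ≠ 0 := by
    rintro rfl
    rw [norm_zero, eq_comm, norm_eq_zero] at hef
    exact hsum (by rw [hef, add_zero])
  have hf : f ≠ 0 := norm_ne_zero_iff.1 (hef ▸ norm_ne_zero_iff.2 he)
  set u := α • e + β • f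
  set w := β • e + α • f
  set p := ‖u‖
  set q := ‖w‖
  have hp : 0 < p := norm_pos_iff.2 (smul_add_smul_ne_zero_of_norm_eq hef he hα.le hβ.le hαβ)
  have hq : 0 < q := norm_pos_iff.2 <| by
    rw [show w = α • f + β • e from add_comm _ _]
    exact smul_add_smul_ne_zero_of_norm_eq hef.symm hf hα.le hβ.le hαβ
  have lower := hL e f hef (q * α + p * β) (q * β + p * α) (by positivity) (by positivity)
  rw [show (q * α + p * β) • e + (q * β + p * α) • f = q • u + p • w by module] at lower
  have upper := hL (q • u) (p • w) (by
    rw [norm_smul, norm_smul, Real.norm_of_nonneg hp.le, Real.norm_of_nonneg hq.le, mul_comm]) p q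
    hp hq
  rw [show p • q • u + q • p • w = (p * q * (α + β)) • (e + f) by module, norm_smul,
    Real.norm_of_nonneg (by positivity)] at upper
  have key : α * β * p * q * ‖e + f‖ ^ 2 * (p - q) ^ 2 ≤ α * β * p * q * ‖e + f‖ ^ 2 * 0 := by
    linear_combination (p * q) * lower + upper
  have hpq := le_antisymm (le_of_mul_le_mul_left key (by positivity)) (sq_nonneg _)
  exact sub_eq_zero.1 (pow_eq_zero_iff two_ne_zero |>.1 hpq)

theorem norm_smul_add_smul_comm (hL : LorchCondition X) {e f : X} (hef : ‖e‖ = ‖f‖)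
    (α β : ℝ) : ‖α • e + β • f‖ = ‖β • e + α • f‖ := by
  have hef' : ‖-e‖ = ‖f‖ := by rw [norm_neg, hef]
  rcases eq_or_ne α 0 with rfl | hα0
  · simp [norm_smul, hef]
  rcases eq_or_ne β 0 with rfl | hβ0
  · simp [norm_smul, hef]
  rcases hα0.lt_or_gt with hα | hα <;> rcases hβ0.lt_or_gt with hβ | hβ
  · have := hL.norm_smul_add_smul_comm_of_pos hef (neg_pos.2 hα) (neg_pos.2 hβ)
    rwa [neg_smul, neg_smul, neg_smul, neg_smul, ← neg_add, ← neg_add, norm_neg, norm_neg] at this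
  · have := hL.norm_smul_add_smul_comm_of_pos hef' (neg_pos.2 hα) hβ
    rwa [neg_smul_neg, smul_neg, neg_smul, ← neg_add, norm_neg] at this
  · have := hL.norm_smul_add_smul_comm_of_pos hef' hα (neg_pos.2 hβ)
    rwa [neg_smul_neg, smul_neg, neg_smul, ← neg_add, norm_neg] at this
  · exact hL.norm_smul_add_smul_comm_of_pos hef hα hβ

theorem norm_smul_add_smul_eq_norm_smul_sub_smul (hL : LorchCondition X) {u v : X}
    (huv : ‖u + v‖ = ‖u - v‖) (s t : ℝ) : ‖s • u + t • v‖ = ‖s • u - t • v‖ := by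
  have := hL.norm_smul_add_smul_comm huv ((s + t) / 2) ((s - t) / 2)
  rwa [show ((s + t) / 2) • (u + v) + ((s - t) / 2) • (u - v) = s • u + t • v by module,
    show ((s - t) / 2) • (u + v) + ((s + t) / 2) • (u - v) = s • u - t • v by module] at this

theorem norm_smul_add_smul_sq_of_norm_eq_one (hL : LorchCondition X) {e z : X} (he : ‖e‖ = 1)
    (hz : ‖z‖ = 1) (hez : ‖e + z‖ = ‖e - z‖) (a b : ℝ) :
    ‖a • e + b • z‖ ^ 2 = a ^ 2 + b ^ 2 := by
  have circle (t : ℝ) : ‖(1 - t ^ 2) • e + (2 * t) • z‖ = 1 + t ^ 2 := by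
    have hpq : ‖(e + t • z) + ((-t) • e + z)‖ = ‖(e + t • z) - ((-t) • e + z)‖ := by
      rw [show (e + t • z) + ((-t) • e + z) = (1 - t) • e + (1 + t) • z by module,
        show (e + t • z) - ((-t) • e + z) = (1 + t) • e - (1 - t) • z by module,
        ← hL.norm_smul_add_smul_eq_norm_smul_sub_smul hez,
        hL.norm_smul_add_smul_comm (he.trans hz.symm)]
    have := hL.norm_smul_add_smul_eq_norm_smul_sub_smul hpq 1 t
    rwa [show (1 : ℝ) • (e + t • z) + t • ((-t) • e + z) = (1 - t ^ 2) • e + (2 * t) • z by module,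
      show (1 : ℝ) • (e + t • z) - t • ((-t) • e + z) = (1 + t ^ 2) • e by module, norm_smul, he,
      mul_one, Real.norm_of_nonneg (by positivity)] at this
  rcases eq_or_ne b 0 with rfl | hb
  · simp [norm_smul, he]
  set r := √(a ^ 2 + b ^ 2)
  have hr : r ^ 2 = a ^ 2 + b ^ 2 := Real.sq_sqrt (by positivity)
  have har : 0 < a + r := by
    have hb2 : 0 < b ^ 2 := by positivity
    have hr0 : 0 ≤ r := Real.sqrt_nonneg _
    by_contra! h
    nlinarith
  -- `(a, b)` is the point of the circle of radius `r` with stereographic parameter `b / (a + r)`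
  have hab : a • e + b • z
      = ((a + r) / 2) • ((1 - (b / (a + r)) ^ 2) • e + (2 * (b / (a + r))) • z) := by
    match_scalars
    · field_simp
      linear_combination -hr
    · field_simp
  rw [hab, norm_smul, circle, Real.norm_of_nonneg (by positivity), ← hr]
  congr 1
  field_simp
  linear_combination -hr

theorem norm_smul_add_smul_sq (hL : LorchCondition X) {u v : X} (huv : ‖u + v‖ = ‖u - v‖)
    (a b : ℝ) : ‖a • u + b • v‖ ^ 2 = a ^ 2 * ‖u‖ ^ 2 + b ^ 2 * ‖v‖ ^ 2 := by
  rcases eq_or_ne u 0 with rfl | hu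
  · simp [norm_smul, mul_pow]
  rcases eq_or_ne v 0 with rfl | hv
  · simp [norm_smul, mul_pow]
  have hu' : ‖u‖ ≠ 0 := norm_ne_zero_iff.2 hu
  have hv' : ‖v‖ ≠ 0 := norm_ne_zero_iff.2 hv
  have := hL.norm_smul_add_smul_sq_of_norm_eq_one
    (by rw [norm_smul, norm_inv, norm_norm, inv_mul_cancel₀ hu'])
    (by rw [norm_smul, norm_inv, norm_norm, inv_mul_cancel₀ hv'])
    (hL.norm_smul_add_smul_eq_norm_smul_sub_smul huv ‖u‖⁻¹ ‖v‖⁻¹) (a * ‖u‖) (b * ‖v‖)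
  rwa [smul_smul, smul_smul, mul_assoc, mul_assoc, mul_inv_cancel₀ hu', mul_inv_cancel₀ hv',
    mul_one, mul_one, mul_pow, mul_pow] at this

theorem parallelogram (hL : LorchCondition X) (x y : X) :
    ‖x + y‖ ^ 2 + ‖x - y‖ ^ 2 = 2 * ‖x‖ ^ 2 + 2 * ‖y‖ ^ 2 := by
  rcases eq_or_ne x 0 with rfl | hx
  · rw [zero_add, zero_sub, norm_neg, norm_zero]
    ring
  rcases eq_or_ne y 0 with rfl | hy
  · rw [add_zero, sub_zero, norm_zero]
    ring
  set u := ‖y‖ • x + ‖x‖ • y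
  set v := ‖y‖ • x - ‖x‖ • y
  have hsum : u + v = (2 * ‖y‖) • x := by module
  have hdiff : u - v = (2 * ‖x‖) • y := by module
  have huv : ‖u + v‖ = ‖u - v‖ := by
    rw [hsum, hdiff, norm_smul, norm_smul, Real.norm_of_nonneg (by positivity),
      Real.norm_of_nonneg (by positivity)]
    ring
  have key (s t : ℝ) :
      ‖s • (u + v) + t • (u - v)‖ ^ 2 = (s + t) ^ 2 * ‖u‖ ^ 2 + (s - t) ^ 2 * ‖v‖ ^ 2 := by
    rw [← hL.norm_smul_add_smul_sq huv,
      show s • (u + v) + t • (u - v) = (s + t) • u + (s - t) • v by module]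
  obtain ⟨s, hx'⟩ : ∃ s : ℝ, x = s • (u + v) :=
    ⟨_, by rw [hsum, inv_smul_smul₀ (by positivity)]⟩
  obtain ⟨t, hy'⟩ : ∃ t : ℝ, y = t • (u - v) :=
    ⟨_, by rw [hdiff, inv_smul_smul₀ (by positivity)]⟩
  have hs := key s 0
  have ht := key 0 t
  rw [zero_smul, add_zero] at hs
  rw [zero_smul, zero_add] at ht
  rw [hx', hy', show s • (u + v) - t • (u - v) = s • (u + v) + (-t) • (u - v) by module,
    key, key, hs, ht]
  ring

end LorchCondition

end

theorem stmt_12 {X : Type*} [NormedAddCommGroup X] [NormedSpace ℝ X]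
    (h : ∀ x y : X, x ≠ 0 → y ≠ 0 →
      ‖(1 / ‖x‖) • x - (1 / ‖y‖) • y‖ ≤ ‖(1 / ‖y‖) • x - (1 / ‖x‖) • y‖) :
    ∀ x y : X, ‖x + y‖ ^ 2 + ‖x - y‖ ^ 2 = 2 * ‖x‖ ^ 2 + 2 * ‖y‖ ^ 2 :=
  (lorchCondition_of_angular_le_skewAngular h).parallelogram
end

section
/- A real normed linear space X is an inner product space if and only if for all nonzero x, y ∈ X, ‖x/‖x‖ − y/‖y‖‖ ≤ ‖x/‖y‖ − y/‖x‖‖. -/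
/-!
In an inner product space the squares of the two distances differ by
`(‖x‖ / ‖y‖ - ‖y‖ / ‖x‖) ^ 2`.

Conversely, the inequality for `a • u` and `-(b • v)`, with `u`, `v` unit vectors, is Lorch's
inequality `a * b * ‖u + v‖ ^ 2 ≤ ‖a • u + b • v‖ ^ 2`. Applied both to the normalisations of
`u + r • v`, `r • u + v` and to `u`, `v` themselves, it forces `‖u + r • v‖ = ‖r • u + v‖`:
swapping two unit vectors is an isometry of the plane they span (Ficken's condition). So the
isometries of every plane act transitively on its unit circle. They have determinant `±1` and
therefore preserve the quadratic form `w ↦ ∫_{‖z‖ ≤ 1} (w × z) ^ 2 dz`; being constant on the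
unit circle, this form is a positive multiple of the squared norm, which thus satisfies the
parallelogram law.
-/

open MeasureTheory Metric Set Function

section NormedSpace

variable {E : Type*} [NormedAddCommGroup E] [NormedSpace ℝ E]

noncomputable def angularDist (x y : E) : ℝ := ‖(1 / ‖x‖) • x - (1 / ‖y‖) • y‖

noncomputable def skewAngularDist (x y : E) : ℝ := ‖(1 / ‖y‖) • x - (1 / ‖x‖) • y‖

theorem angularDist_le_skewAngularDist {F : Type*} [NormedAddCommGroup F]
    [InnerProductSpace ℝ F] {x y : F} (hx : x ≠ 0) (hy : y ≠ 0) :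
    angularDist x y ≤ skewAngularDist x y := by
  have ha : 0 < ‖x‖ := norm_pos_iff.2 hx
  have hb : 0 < ‖y‖ := norm_pos_iff.2 hy
  refine (pow_le_pow_iff_left₀ (norm_nonneg _) (norm_nonneg _) two_ne_zero).1 ?_
  rw [norm_sub_sq_real, norm_sub_sq_real]
  simp only [norm_smul, real_inner_smul_left, real_inner_smul_right, Real.norm_of_nonneg,
    one_div, inv_nonneg, norm_nonneg]
  have : 0 ≤ (‖x‖ / ‖y‖ - ‖y‖ / ‖x‖) ^ 2 := sq_nonneg _
  field_simp at this ⊢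
  nlinarith

lemma mul_mul_norm_add_le_of_angularDist_le
    (h : ∀ x y : E, x ≠ 0 → y ≠ 0 → angularDist x y ≤ skewAngularDist x y)
    {u v : E} (hu : ‖u‖ = 1) (hv : ‖v‖ = 1) {a b : ℝ} (ha : 0 < a) (hb : 0 < b) :
    a * b * ‖u + v‖ ≤ ‖a ^ 2 • u + b ^ 2 • v‖ := by
  have hu0 : u ≠ 0 := by rintro rfl; simp at hu
  have hv0 : v ≠ 0 := by rintro rfl; simp at hv
  have H := h (a • u) (-(b • v)) (smul_ne_zero ha.ne' hu0) (neg_ne_zero.2 (smul_ne_zero hb.ne' hv0))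
  have hx : ‖a • u‖ = a := by rw [norm_smul, hu, Real.norm_of_nonneg ha.le, mul_one]
  have hy : ‖-(b • v)‖ = b := by rw [norm_neg, norm_smul, hv, Real.norm_of_nonneg hb.le, mul_one]
  have e1 : (1 / a) • (a • u) - (1 / b) • -(b • v) = u + v := by
    match_scalars <;> field_simp
  have e2 : (1 / b) • (a • u) - (1 / a) • -(b • v) = (a * b)⁻¹ • (a ^ 2 • u + b ^ 2 • v) := by
    match_scalars <;> field_simp
  rw [angularDist, skewAngularDist, hx, hy, e1, e2, norm_smul, norm_inv,
    Real.norm_of_nonneg (mul_pos ha hb).le, inv_mul_eq_div, le_div_iff₀ (mul_pos ha hb)] at H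
  linarith

lemma mul_mul_norm_add_sq_le_of_angularDist_le
    (h : ∀ x y : E, x ≠ 0 → y ≠ 0 → angularDist x y ≤ skewAngularDist x y)
    {u v : E} (hu : ‖u‖ = 1) (hv : ‖v‖ = 1) {a b : ℝ} (ha : 0 < a) (hb : 0 < b) :
    a * b * ‖u + v‖ ^ 2 ≤ ‖a • u + b • v‖ ^ 2 := by
  have H := mul_mul_norm_add_le_of_angularDist_le h hu hv (Real.sqrt_pos.2 ha)
    (Real.sqrt_pos.2 hb)
  rw [Real.sq_sqrt ha.le, Real.sq_sqrt hb.le] at H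
  calc a * b * ‖u + v‖ ^ 2 = (√a * √b * ‖u + v‖) ^ 2 := by
        rw [mul_pow, mul_pow, Real.sq_sqrt ha.le, Real.sq_sqrt hb.le]
    _ ≤ ‖a • u + b • v‖ ^ 2 := pow_le_pow_left₀ (by positivity) H 2

lemma smul_add_ne_zero_of_norm_eq_one {u v : E} (hu : ‖u‖ = 1) (hv : ‖v‖ = 1) (huv : u + v ≠ 0)
    {r : ℝ} (hr : 0 ≤ r) : r • u + v ≠ 0 := by
  intro h
  have hv' : v = -(r • u) := eq_neg_of_add_eq_zero_right h
  have hr1 : r = 1 := by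
    rwa [hv', norm_neg, norm_smul, hu, Real.norm_of_nonneg hr, mul_one] at hv
  exact huv (by rw [hv', hr1, one_smul, add_neg_cancel])

section Ficken

variable (hLorch : ∀ u v : E, ‖u‖ = 1 → ‖v‖ = 1 → ∀ a b : ℝ, 0 < a → 0 < b →
    a * b * ‖u + v‖ ^ 2 ≤ ‖a • u + b • v‖ ^ 2)
include hLorch

lemma norm_add_smul_eq_norm_smul_add {u v : E} (hu : ‖u‖ = 1) (hv : ‖v‖ = 1) {r : ℝ}
    (hr : 0 < r) : ‖u + r • v‖ = ‖r • u + v‖ := by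
  rcases eq_or_ne (u + v) 0 with huv | huv
  · rw [eq_neg_of_add_eq_zero_right huv, show u + r • -u = (1 - r) • u by module,
      show r • u + -u = (r - 1) • u by module, norm_smul, norm_smul, norm_sub_rev]
  have hA : u + r • v ≠ 0 := by
    rw [add_comm]; exact smul_add_ne_zero_of_norm_eq_one hv hu (by rwa [add_comm]) hr.le
  have hB : r • u + v ≠ 0 := smul_add_ne_zero_of_norm_eq_one hu hv huv hr.le
  set A := ‖u + r • v‖
  set B := ‖r • u + v‖
  have hA0 : 0 < A := norm_pos_iff.2 hA
  have hB0 : 0 < B := norm_pos_iff.2 hB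
  have hp : 0 < ‖u + v‖ ^ 2 := by positivity
  -- Lorch for the unit vectors `A⁻¹ • (u + r • v)`, `B⁻¹ • (r • u + v)` bounds `‖Y‖` from above,
  -- Lorch for `u`, `v` bounds it from below; together they give `r * (A - B) ^ 2 ≤ 0`.
  set Y := A⁻¹ • (u + r • v) + B⁻¹ • (r • u + v)
  have hY_le : A * B * ‖Y‖ ^ 2 ≤ (1 + r) ^ 2 * ‖u + v‖ ^ 2 := by
    have hunit : ∀ {x : E}, x ≠ 0 → ‖‖x‖⁻¹ • x‖ = 1 := fun hx => by
      simpa using norm_smul_inv_norm (𝕜 := ℝ) hx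
    have := hLorch _ _ (hunit hA) (hunit hB) A B hA0 hB0
    rwa [smul_inv_smul₀ hA0.ne', smul_inv_smul₀ hB0.ne',
      show u + r • v + (r • u + v) = (1 + r) • (u + v) by module, norm_smul, mul_pow,
      Real.norm_eq_abs, sq_abs] at this
  have le_hY : (A⁻¹ + r * B⁻¹) * (r * A⁻¹ + B⁻¹) * ‖u + v‖ ^ 2 ≤ ‖Y‖ ^ 2 := by
    have := hLorch u v hu hv _ _ (by positivity : 0 < A⁻¹ + r * B⁻¹)
      (by positivity : 0 < r * A⁻¹ + B⁻¹)
    rwa [show (A⁻¹ + r * B⁻¹) • u + (r * A⁻¹ + B⁻¹) • v = Y by module] at this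
  have hcoef : A * B * ((A⁻¹ + r * B⁻¹) * (r * A⁻¹ + B⁻¹)) ≤ (1 + r) ^ 2 :=
    le_of_mul_le_mul_right
      (by linarith [mul_le_mul_of_nonneg_left le_hY (mul_pos hA0 hB0).le]) hp
  have hAB : (B + r * A) * (r * B + A) ≤ (1 + r) ^ 2 * (A * B) := by
    calc (B + r * A) * (r * B + A)
        = A * B * ((A⁻¹ + r * B⁻¹) * (r * A⁻¹ + B⁻¹)) * (A * B) := by field_simp
      _ ≤ (1 + r) ^ 2 * (A * B) := mul_le_mul_of_nonneg_right hcoef (mul_pos hA0 hB0).le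
  have hsq : r * (A - B) ^ 2 ≤ r * 0 := by nlinarith
  have hsq' : (A - B) ^ 2 = 0 := le_antisymm (le_of_mul_le_mul_left hsq hr) (sq_nonneg _)
  exact sub_eq_zero.1 (pow_eq_zero_iff two_ne_zero |>.1 hsq')

lemma norm_smul_add_smul_comm {u v : E} (hu : ‖u‖ = 1) (hv : ‖v‖ = 1) (s t : ℝ) :
    ‖s • u + t • v‖ = ‖t • u + s • v‖ := by
  rcases eq_or_ne s 0 with rfl | hs
  · simp [norm_smul, hu, hv]
  have hcomm : ∀ r : ℝ, ‖u + r • v‖ = ‖r • u + v‖ := by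
    intro r
    rcases lt_trichotomy r 0 with hr | rfl | hr
    · rw [show u + r • v = u + (-r) • -v by module, show r • u + v = -((-r) • u + -v) by module,
        norm_neg, norm_add_smul_eq_norm_smul_add hLorch hu (by rwa [norm_neg]) (neg_pos.2 hr)]
    · simp [hu, hv]
    · exact norm_add_smul_eq_norm_smul_add hLorch hu hv hr
  rw [show s • u + t • v = s • (u + (t / s) • v) by match_scalars <;> field_simp,
    show t • u + s • v = s • ((t / s) • u + v) by match_scalars <;> field_simp,
    norm_smul, norm_smul, hcomm]

end Ficken

end NormedSpace

def cross (w z : Fin 2 → ℝ) : ℝ := w 0 * z 1 - w 1 * z 0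

lemma cross_map (T : (Fin 2 → ℝ) →ₗ[ℝ] (Fin 2 → ℝ)) (w z : Fin 2 → ℝ) :
    cross (T w) (T z) = T.det * cross w z := by
  rw [← LinearMap.toMatrix'_mulVec T w, ← LinearMap.toMatrix'_mulVec T z,
    ← LinearMap.det_toMatrix', Matrix.det_fin_two]
  simp only [cross, Matrix.mulVec, dotProduct, Fin.sum_univ_two]
  ring

section Plane

variable {E : Type*} [NormedAddCommGroup E] [NormedSpace ℝ E]
  {L : (Fin 2 → ℝ) →ₗ[ℝ] E}

lemma isCompact_preimage_closedBall (hL : Injective L) : IsCompact (L ⁻¹' closedBall 0 1) := by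
  obtain ⟨K, -, hK⟩ := L.exists_antilipschitzWith (LinearMap.ker_eq_bot.2 hL)
  exact isCompact_of_isClosed_isBounded
    (isClosed_closedBall.preimage L.continuous_of_finiteDimensional)
    (hK.isBounded_preimage isBounded_closedBall)

lemma volume_preimage_closedBall_pos : 0 < volume (L ⁻¹' closedBall 0 1) :=
  ((isOpen_ball.preimage L.continuous_of_finiteDimensional).measure_pos volume
    ⟨0, by simp⟩).trans_le (measure_mono (preimage_mono ball_subset_closedBall))

variable (L) in
noncomputable def crossMoment (w : Fin 2 → ℝ) : ℝ := ∫ z in L ⁻¹' closedBall 0 1, cross w z ^ 2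

lemma integrableOn_cross_sq (hL : Injective L) (w : Fin 2 → ℝ) :
    IntegrableOn (fun z => cross w z ^ 2) (L ⁻¹' closedBall 0 1) :=
  (by unfold cross; fun_prop : Continuous fun z => cross w z ^ 2).continuousOn.integrableOn_compact
    (isCompact_preimage_closedBall hL)

lemma crossMoment_smul (c : ℝ) (w : Fin 2 → ℝ) :
    crossMoment L (c • w) = c ^ 2 * crossMoment L w := by
  rw [crossMoment, crossMoment, ← integral_const_mul]
  congr 1 with z
  simp only [cross, Pi.smul_apply, smul_eq_mul]
  ring

lemma crossMoment_add_add_crossMoment_sub (hL : Injective L) (v w : Fin 2 → ℝ) :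
    crossMoment L (v + w) + crossMoment L (v - w) =
      2 * crossMoment L v + 2 * crossMoment L w := by
  have hI := integrableOn_cross_sq hL
  rw [crossMoment, crossMoment, crossMoment, crossMoment, ← integral_add (hI _) (hI _),
    ← integral_const_mul, ← integral_const_mul, ← integral_add ((hI _).const_mul _)
    ((hI _).const_mul _)]
  congr 1 with z
  simp only [cross, Pi.add_apply, Pi.sub_apply]
  ring

lemma crossMoment_pos (hL : Injective L) {w : Fin 2 → ℝ} (hw : w ≠ 0) :
    0 < crossMoment L w := by
  rw [crossMoment, setIntegral_pos_iff_support_of_nonneg_ae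
    (Filter.Eventually.of_forall fun z => sq_nonneg _) (integrableOn_cross_sq hL w)]
  set z₀ : Fin 2 → ℝ := ![-w 1, w 0]
  have hz₀ : cross w z₀ ≠ 0 := by
    have : w 0 ^ 2 + w 1 ^ 2 ≠ 0 := fun h => hw <| by
      ext i; fin_cases i <;> simp <;> nlinarith [sq_nonneg (w 0), sq_nonneg (w 1)]
    simpa [cross, z₀, ← sq, sub_neg_eq_add] using this
  set c : ℝ := (‖L z₀‖ + 1)⁻¹
  have hc : 0 < c := by positivity
  have hU : IsOpen ({z | cross w z ≠ 0} ∩ L ⁻¹' ball 0 1) :=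
    (isOpen_ne_fun (by unfold cross; fun_prop) continuous_const).inter
      (isOpen_ball.preimage L.continuous_of_finiteDimensional)
  refine (hU.measure_pos volume ⟨c • z₀, ?_, ?_⟩).trans_le (measure_mono ?_)
  · show cross w (c • z₀) ≠ 0
    rw [show cross w (c • z₀) = c * cross w z₀ by
      simp only [cross, Pi.smul_apply, smul_eq_mul]; ring]
    exact mul_ne_zero hc.ne' hz₀
  · rw [mem_preimage, mem_ball_zero_iff, map_smul, norm_smul, Real.norm_of_nonneg hc.le,
      inv_mul_lt_one₀ (by positivity)]
    exact lt_add_one _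
  · exact inter_subset_inter (fun z hz => pow_ne_zero 2 hz)
      (preimage_mono ball_subset_closedBall)

section Isometry

variable {T : (Fin 2 → ℝ) →ₗ[ℝ] (Fin 2 → ℝ)} (hT : ∀ p, ‖L (T p)‖ = ‖L p‖)
include hT

lemma injective_of_norm_map (hL : Injective L) : Injective T := fun p q hpq => hL <| by
  rw [← sub_eq_zero, ← map_sub, ← norm_eq_zero, ← hT, map_sub, hpq, sub_self, map_zero,
    norm_zero]

lemma image_preimage_closedBall_of_norm_map (hL : Injective L) :
    T '' (L ⁻¹' closedBall 0 1) = L ⁻¹' closedBall 0 1 := by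
  refine Subset.antisymm (image_subset_iff.2 fun p hp => ?_) fun p hp => ?_
  · simpa [hT] using hp
  · obtain ⟨q, rfl⟩ := LinearMap.injective_iff_surjective.1 (injective_of_norm_map hT hL) p
    exact ⟨q, by simpa [hT] using hp, rfl⟩

lemma abs_det_eq_one_of_norm_map (hL : Injective L) : |T.det| = 1 := by
  have h := Measure.addHaar_image_linearMap volume T (L ⁻¹' closedBall 0 1)
  rw [image_preimage_closedBall_of_norm_map hT hL, eq_comm,
    ENNReal.mul_eq_right volume_preimage_closedBall_pos.ne'
      (isCompact_preimage_closedBall hL).measure_lt_top.ne, ENNReal.ofReal_eq_one] at h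
  exact h

lemma crossMoment_map (hL : Injective L) (w : Fin 2 → ℝ) :
    crossMoment L (T w) = crossMoment L w := by
  have hdet : T.det ^ 2 = 1 := by rw [← sq_abs, abs_det_eq_one_of_norm_map hT hL, one_pow]
  calc crossMoment L (T w) = ∫ z in T '' (L ⁻¹' closedBall 0 1), cross (T w) z ^ 2 := by
        rw [image_preimage_closedBall_of_norm_map hT hL, crossMoment]
    _ = ∫ z in L ⁻¹' closedBall 0 1, |T.det| • cross (T w) (T z) ^ 2 :=
        integral_image_eq_integral_abs_det_fderiv_smul volume
          (isClosed_closedBall.preimage L.continuous_of_finiteDimensional).measurableSet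
          (fun z _ => (LinearMap.toContinuousLinearMap T).hasFDerivAt.hasFDerivWithinAt)
          (injective_of_norm_map hT hL).injOn _
    _ = crossMoment L w := by
        simp only [cross_map, abs_det_eq_one_of_norm_map hT hL, mul_pow, hdet, one_smul, one_mul,
          crossMoment]

end Isometry

lemma norm_map_inv_norm_smul (hL : Injective L) {p : Fin 2 → ℝ} (hp : p ≠ 0) :
    ‖L (‖L p‖⁻¹ • p)‖ = 1 := by
  rw [map_smul, norm_smul, norm_inv, norm_norm,
    inv_mul_cancel₀ (norm_ne_zero_iff.2 ((map_ne_zero_iff L hL).2 hp))]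

section Transitive

variable (htrans : ∀ z w, ‖L z‖ = 1 → ‖L w‖ = 1 →
  ∃ T : (Fin 2 → ℝ) →ₗ[ℝ] (Fin 2 → ℝ), (∀ p, ‖L (T p)‖ = ‖L p‖) ∧ T z = w)
include htrans

lemma crossMoment_eq_norm_sq_mul (hL : Injective L) {u : Fin 2 → ℝ} (hu : ‖L u‖ = 1)
    (p : Fin 2 → ℝ) : crossMoment L p = ‖L p‖ ^ 2 * crossMoment L u := by
  rcases eq_or_ne p 0 with rfl | hp
  · simpa using crossMoment_smul (L := L) 0 u
  obtain ⟨T, hT, hTp⟩ := htrans _ u (norm_map_inv_norm_smul hL hp) hu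
  have hLp : ‖L p‖ ≠ 0 := norm_ne_zero_iff.2 ((map_ne_zero_iff L hL).2 hp)
  calc crossMoment L p = crossMoment L (‖L p‖ • ‖L p‖⁻¹ • p) := by rw [smul_inv_smul₀ hLp]
    _ = ‖L p‖ ^ 2 * crossMoment L u := by rw [crossMoment_smul, ← hTp, crossMoment_map hT hL]

theorem parallelogram_of_transitive_isometries (hL : Injective L) (v w : Fin 2 → ℝ) :
    ‖L (v + w)‖ ^ 2 + ‖L (v - w)‖ ^ 2 = 2 * ‖L v‖ ^ 2 + 2 * ‖L w‖ ^ 2 := by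
  obtain ⟨e, he⟩ := exists_ne (0 : Fin 2 → ℝ)
  have hu := norm_map_inv_norm_smul hL he
  have hk := crossMoment_pos hL (w := ‖L e‖⁻¹ • e) fun h0 => by simp [h0] at hu
  have h := crossMoment_add_add_crossMoment_sub hL v w
  have hQ := crossMoment_eq_norm_sq_mul htrans hL hu
  rw [hQ (v + w), hQ (v - w), hQ v, hQ w] at h
  exact mul_right_cancel₀ hk.ne' (by linarith)

end Transitive

end Plane

section FickenCondition

variable {E : Type*} [NormedAddCommGroup E] [NormedSpace ℝ E]
  (hsymm : ∀ u v : E, ‖u‖ = 1 → ‖v‖ = 1 → ∀ s t : ℝ, ‖s • u + t • v‖ = ‖t • u + s • v‖)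
include hsymm

lemma exists_norm_map_eq_of_norm_eq_one (L : (Fin 2 → ℝ) →ₗ[ℝ] E) {z w : Fin 2 → ℝ}
    (hz : ‖L z‖ = 1) (hw : ‖L w‖ = 1) :
    ∃ T : (Fin 2 → ℝ) →ₗ[ℝ] (Fin 2 → ℝ), (∀ p, ‖L (T p)‖ = ‖L p‖) ∧ T z = w := by
  by_cases hli : LinearIndependent ℝ ![w, z]
  · set b := basisOfLinearIndependentOfCardEqFinrank hli (by simp)
    have hb : ⇑b = ![w, z] := coe_basisOfLinearIndependentOfCardEqFinrank hli _
    have hTw : b.constr ℝ ![z, w] w = z := by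
      simpa [hb] using b.constr_basis ℝ ![z, w] 0
    have hTz : b.constr ℝ ![z, w] z = w := by
      simpa [hb] using b.constr_basis ℝ ![z, w] 1
    refine ⟨b.constr ℝ ![z, w], fun p => ?_, hTz⟩
    have hp : p = b.repr p 0 • w + b.repr p 1 • z := by
      conv_lhs => rw [← b.sum_repr p]
      simp [Fin.sum_univ_two, hb]
    rw [hp, map_add, map_smul, map_smul, hTw, hTz, map_add, map_add, map_smul, map_smul,
      map_smul, map_smul, hsymm _ _ hz hw, add_comm]
  · have hz0 : z ≠ 0 := by rintro rfl; simp at hz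
    obtain ⟨a, rfl⟩ : ∃ a : ℝ, a • z = w := by
      simpa [linearIndependent_fin2, hz0] using hli
    have ha : |a| = 1 := by simpa [norm_smul, hz] using hw
    exact ⟨a • LinearMap.id, fun p => by simp [norm_smul, ha], rfl⟩

theorem parallelogram_of_norm_smul_add_smul_comm (x y : E) :
    ‖x + y‖ ^ 2 + ‖x - y‖ ^ 2 = 2 * ‖x‖ ^ 2 + 2 * ‖y‖ ^ 2 := by
  by_cases hli : LinearIndependent ℝ ![x, y]
  · simpa using parallelogram_of_transitive_isometries
      (fun _ _ => exists_norm_map_eq_of_norm_eq_one hsymm _) hli.fintypeLinearCombination_injective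
      (Pi.single 0 1) (Pi.single 1 1)
  · obtain rfl | ⟨a, rfl⟩ : y = 0 ∨ ∃ a : ℝ, a • y = x := by
      simpa [linearIndependent_fin2, or_iff_not_imp_left] using hli
    · simp; ring
    · rw [show a • y + y = (a + 1) • y by module, show a • y - y = (a - 1) • y by module]
      simp only [norm_smul, mul_pow, Real.norm_eq_abs, sq_abs]
      ring

end FickenCondition

theorem stmt_13 {X : Type*} [NormedAddCommGroup X] [NormedSpace ℝ X] :
    (∀ x y : X, ‖x + y‖ ^ 2 + ‖x - y‖ ^ 2 = 2 * ‖x‖ ^ 2 + 2 * ‖y‖ ^ 2) ↔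
    (∀ x y : X, x ≠ 0 → y ≠ 0 →
      ‖(1 / ‖x‖) • x - (1 / ‖y‖) • y‖ ≤ ‖(1 / ‖y‖) • x - (1 / ‖x‖) • y‖) := by
  refine ⟨fun h x y hx hy => ?_, fun h => ?_⟩
  · let _ : InnerProductSpace ℝ X := .ofNorm ℝ fun x y => by linarith [h x y]
    exact angularDist_le_skewAngularDist hx hy
  · exact parallelogram_of_norm_smul_add_smul_comm fun u v hu hv =>
      norm_smul_add_smul_comm (fun u v hu hv a b ha hb =>
        mul_mul_norm_add_sq_le_of_angularDist_le h hu hv ha hb) hu hv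
end

section
/- For any nonzero vectors x and y in a real normed linear space, ‖x+y‖ ≤ ‖x‖ + ‖y‖ − (2 − ‖x/‖x‖ + y/‖y‖‖)·min{‖x‖, ‖y‖}. -/
/-! Assume `‖x‖ ≤ ‖y‖` and write `x̂ = x / ‖x‖`, `ŷ = y / ‖y‖`. Then
`x + y = ‖x‖ • (x̂ + ŷ) + (‖y‖ - ‖x‖) • ŷ`, and the triangle inequality applied to this
decomposition gives `‖x + y‖ ≤ ‖x‖ ‖x̂ + ŷ‖ + ‖y‖ - ‖x‖`, which is the claim. -/

section

variable {E : Type*} [NormedAddCommGroup E] [NormedSpace ℝ E]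

theorem norm_smul_one_div_norm_smul (x : E) : ‖x‖ • (1 / ‖x‖) • x = x := by
  rcases eq_or_ne x 0 with rfl | hx
  · simp
  · rw [smul_smul, mul_one_div_cancel (norm_ne_zero_iff.mpr hx), one_smul]

theorem norm_one_div_norm_smul_le_one (x : E) : ‖(1 / ‖x‖) • x‖ ≤ 1 := by
  rw [norm_smul, Real.norm_of_nonneg (by positivity), one_div]
  exact inv_mul_le_one_of_le₀ le_rfl (norm_nonneg x)

theorem norm_add_le_of_norm_le {x y : E} (h : ‖x‖ ≤ ‖y‖) :
    ‖x + y‖ ≤ ‖x‖ * ‖(1 / ‖x‖) • x + (1 / ‖y‖) • y‖ + (‖y‖ - ‖x‖) := by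
  set u := (1 / ‖x‖) • x + (1 / ‖y‖) • y
  have decomp : x + y = ‖x‖ • u + (‖y‖ - ‖x‖) • (1 / ‖y‖) • y := by
    conv_lhs => rw [← norm_smul_one_div_norm_smul x, ← norm_smul_one_div_norm_smul y]
    simp only [u, smul_add, sub_smul]
    abel
  calc ‖x + y‖ ≤ ‖‖x‖ • u‖ + ‖(‖y‖ - ‖x‖) • (1 / ‖y‖) • y‖ := decomp ▸ norm_add_le _ _
    _ = ‖x‖ * ‖u‖ + (‖y‖ - ‖x‖) * ‖(1 / ‖y‖) • y‖ := by
      rw [norm_smul, norm_smul, Real.norm_of_nonneg (norm_nonneg x),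
        Real.norm_of_nonneg (sub_nonneg.mpr h)]
    _ ≤ ‖x‖ * ‖u‖ + (‖y‖ - ‖x‖) := by
      gcongr
      exact mul_le_of_le_one_right (sub_nonneg.mpr h) (norm_one_div_norm_smul_le_one y)

end

theorem stmt_14_general {X : Type*} [NormedAddCommGroup X] [NormedSpace ℝ X]
    (x y : X) :
    ‖x + y‖ ≤ ‖x‖ + ‖y‖ - (2 - ‖(1 / ‖x‖) • x + (1 / ‖y‖) • y‖) * min ‖x‖ ‖y‖ := by
  rcases le_total ‖x‖ ‖y‖ with h | h
  · have := norm_add_le_of_norm_le h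
    rw [min_eq_left h]
    linarith
  · have := norm_add_le_of_norm_le h
    rw [add_comm y, add_comm ((1 / ‖y‖) • y)] at this
    rw [min_eq_right h]
    linarith

theorem stmt_14 {X : Type*} [NormedAddCommGroup X] [NormedSpace ℝ X]
    (x y : X) (hx : x ≠ 0) (hy : y ≠ 0) :
    ‖x + y‖ ≤ ‖x‖ + ‖y‖ - (2 - ‖(1 / ‖x‖) • x + (1 / ‖y‖) • y‖) * min ‖x‖ ‖y‖ :=
  stmt_14_general x y
end

section
/- For any nonzero vectors x and y in a real normed linear space, the angular distance α[x,y] = ‖x/‖x‖ − y/‖y‖‖ satisfies (‖x−y‖ − |‖x‖−‖y‖|)/min{‖x‖,‖y‖} ≤ α[x,y] ≤ (‖x−y‖ + |‖x‖−‖y‖|)/max{‖x‖,‖y‖}. -/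
private lemma aux16 {X : Type*} [NormedAddCommGroup X] [NormedSpace ℝ X]
    (x y : X) (hx : x ≠ 0) (hy : y ≠ 0) (h : ‖y‖ ≤ ‖x‖) :
    (‖x - y‖ - (‖x‖ - ‖y‖)) / ‖y‖ ≤ ‖(1 / ‖x‖) • x - (1 / ‖y‖) • y‖ ∧
    ‖(1 / ‖x‖) • x - (1 / ‖y‖) • y‖ ≤ (‖x - y‖ + (‖x‖ - ‖y‖)) / ‖x‖ := by
  have ha : (0:ℝ) < ‖x‖ := norm_pos_iff.2 hx
  have hb : (0:ℝ) < ‖y‖ := norm_pos_iff.2 hy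
  set u := (1 / ‖x‖) • x with hu
  set v := (1 / ‖y‖) • y with hv
  have hxu : ‖x‖ • u = x := by
    rw [hu, smul_smul, mul_one_div, div_self ha.ne', one_smul]
  have hyv : ‖y‖ • v = y := by
    rw [hv, smul_smul, mul_one_div, div_self hb.ne', one_smul]
  have hnu : ‖u‖ = 1 := by
    rw [hu, norm_smul, norm_div, norm_one, Real.norm_eq_abs, abs_of_pos ha,
      one_div, inv_mul_cancel₀ ha.ne']
  have hnv : ‖v‖ = 1 := by
    rw [hv, norm_smul, norm_div, norm_one, Real.norm_eq_abs, abs_of_pos hb,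
      one_div, inv_mul_cancel₀ hb.ne']
  have hab : 0 ≤ ‖x‖ - ‖y‖ := sub_nonneg.2 h
  constructor
  · rw [div_le_iff₀ hb, sub_le_iff_le_add]
    have e1 : x - y = ‖y‖ • (u - v) + (‖x‖ - ‖y‖) • u := by
      rw [smul_sub, sub_smul, hxu, hyv]; abel
    calc ‖x - y‖ ≤ ‖‖y‖ • (u - v)‖ + ‖(‖x‖ - ‖y‖) • u‖ := by
            rw [e1]; exact norm_add_le _ _
      _ = ‖(1 / ‖x‖) • x - (1 / ‖y‖) • y‖ * ‖y‖ + (‖x‖ - ‖y‖) := by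
            rw [norm_smul, norm_smul, hnu, Real.norm_eq_abs, Real.norm_eq_abs,
              abs_of_pos hb, abs_of_nonneg hab, mul_one, mul_comm]
  · rw [le_div_iff₀ ha]
    have e2 : ‖x‖ • (u - v) = (x - y) - (‖x‖ - ‖y‖) • v := by
      rw [smul_sub, sub_smul, hxu, hyv]; abel
    calc ‖(1 / ‖x‖) • x - (1 / ‖y‖) • y‖ * ‖x‖ = ‖‖x‖ • (u - v)‖ := by
            rw [norm_smul, Real.norm_eq_abs, abs_of_pos ha, mul_comm]
      _ ≤ ‖x - y‖ + ‖(‖x‖ - ‖y‖) • v‖ := by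
            rw [e2]; exact norm_sub_le _ _
      _ = ‖x - y‖ + (‖x‖ - ‖y‖) := by
            rw [norm_smul, hnv, mul_one, Real.norm_eq_abs, abs_of_nonneg hab]

theorem stmt_16 {X : Type*} [NormedAddCommGroup X] [NormedSpace ℝ X]
    (x y : X) (hx : x ≠ 0) (hy : y ≠ 0) :
    (‖x - y‖ - |‖x‖ - ‖y‖|) / min ‖x‖ ‖y‖ ≤ ‖(1 / ‖x‖) • x - (1 / ‖y‖) • y‖ ∧
    ‖(1 / ‖x‖) • x - (1 / ‖y‖) • y‖ ≤ (‖x - y‖ + |‖x‖ - ‖y‖|) / max ‖x‖ ‖y‖ := by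
  rcases le_total ‖y‖ ‖x‖ with h | h
  · have := aux16 x y hx hy h
    rwa [min_eq_right h, max_eq_left h, abs_of_nonneg (sub_nonneg.2 h)]
  · have := aux16 y x hy hx h
    rw [min_eq_left h, max_eq_right h, abs_sub_comm, abs_of_nonneg (sub_nonneg.2 h),
      norm_sub_rev, norm_sub_rev ((1 / ‖x‖) • x)]
    exact this
end

section
/- For any nonzero vectors x and y in a real normed linear space, the angular distance satisfies α[x,y] ≤ 2‖x−y‖/max{‖x‖,‖y‖} (Massera–Schäffer inequality). -/
lemma aux_ms {X : Type*} [NormedAddCommGroup X] [NormedSpace ℝ X]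
    (x y : X) (hx : x ≠ 0) (hy : y ≠ 0) (h : ‖y‖ ≤ ‖x‖) :
    ‖(1 / ‖x‖) • x - (1 / ‖y‖) • y‖ ≤ 2 * ‖x - y‖ / ‖x‖ := by
  have ha : (0:ℝ) < ‖x‖ := norm_pos_iff.mpr hx
  have hb : (0:ℝ) < ‖y‖ := norm_pos_iff.mpr hy
  have key : ‖(1 / ‖x‖) • x - (1 / ‖y‖) • y‖ ≤
      ‖(1 / ‖x‖) • x - (1 / ‖x‖) • y‖ + ‖(1 / ‖x‖) • y - (1 / ‖y‖) • y‖ :=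
    norm_sub_le_norm_sub_add_norm_sub _ _ _
  have h1 : ‖(1 / ‖x‖) • x - (1 / ‖x‖) • y‖ = ‖x - y‖ / ‖x‖ := by
    rw [← smul_sub, norm_smul]
    simp [abs_of_pos (by positivity : (0:ℝ) < 1 / ‖x‖)]
    ring
  have h2 : ‖(1 / ‖x‖) • y - (1 / ‖y‖) • y‖ = (‖x‖ - ‖y‖) / ‖x‖ := by
    rw [← sub_smul, norm_smul]
    rw [Real.norm_eq_abs, abs_of_nonpos (by
      rw [sub_nonpos]
      exact div_le_div_of_nonneg_left one_pos.le hb h)]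
    field_simp
    ring
  have h3 : ‖x‖ - ‖y‖ ≤ ‖x - y‖ := (abs_le.mp (abs_norm_sub_norm_le x y)).2
  calc ‖(1 / ‖x‖) • x - (1 / ‖y‖) • y‖ ≤ ‖x - y‖ / ‖x‖ + (‖x‖ - ‖y‖) / ‖x‖ := by
        rw [← h1, ← h2]; exact key
    _ ≤ ‖x - y‖ / ‖x‖ + ‖x - y‖ / ‖x‖ := by
        gcongr
    _ = 2 * ‖x - y‖ / ‖x‖ := by ring

theorem stmt_17 {X : Type*} [NormedAddCommGroup X] [NormedSpace ℝ X]
    (x y : X) (hx : x ≠ 0) (hy : y ≠ 0) :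
    ‖(1 / ‖x‖) • x - (1 / ‖y‖) • y‖ ≤ 2 * ‖x - y‖ / max ‖x‖ ‖y‖ := by
  rcases le_total ‖y‖ ‖x‖ with h | h
  · rw [max_eq_left h]; exact aux_ms x y hx hy h
  · rw [max_eq_right h, norm_sub_rev, norm_sub_rev x y]
    exact aux_ms y x hy hx h
end

section
/- For any nonzero vectors x and y in a real normed linear space, the angular distance satisfies α[x,y] ≤ 4‖x−y‖/(‖x‖+‖y‖) (Dunkl–Williams inequality). -/
private lemma dw_aux {X : Type*} [NormedAddCommGroup X] [NormedSpace ℝ X]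
    (x y : X) (hx : x ≠ 0) (hy : y ≠ 0) (hle : ‖y‖ ≤ ‖x‖) :
    ‖(1 / ‖x‖) • x - (1 / ‖y‖) • y‖ ≤ 4 * ‖x - y‖ / (‖x‖ + ‖y‖) := by
  have hxn : (0:ℝ) < ‖x‖ := norm_pos_iff.mpr hx
  have hyn : (0:ℝ) < ‖y‖ := norm_pos_iff.mpr hy
  have key : (1 / ‖x‖) • x - (1 / ‖y‖) • y
      = (1 / ‖x‖) • (x - y) + (1 / ‖x‖ - 1 / ‖y‖) • y := by
    rw [smul_sub, sub_smul]; abel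
  rw [key]
  have h1 : ‖(1 / ‖x‖) • (x - y)‖ = ‖x - y‖ / ‖x‖ := by
    rw [norm_smul, Real.norm_eq_abs, abs_of_pos (by positivity)]; ring
  have h2 : ‖(1 / ‖x‖ - 1 / ‖y‖) • y‖ = |‖y‖ - ‖x‖| / ‖x‖ := by
    rw [norm_smul, Real.norm_eq_abs]
    rw [show (1 / ‖x‖ - 1 / ‖y‖) = (‖y‖ - ‖x‖) / (‖x‖ * ‖y‖) by field_simp]
    rw [abs_div, abs_of_pos (show (0:ℝ) < ‖x‖ * ‖y‖ by positivity)]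
    field_simp
  have h3 : |‖y‖ - ‖x‖| ≤ ‖x - y‖ := by
    rw [abs_sub_comm]; exact abs_norm_sub_norm_le x y
  calc ‖(1 / ‖x‖) • (x - y) + (1 / ‖x‖ - 1 / ‖y‖) • y‖
      ≤ ‖(1 / ‖x‖) • (x - y)‖ + ‖(1 / ‖x‖ - 1 / ‖y‖) • y‖ := norm_add_le _ _
    _ = ‖x - y‖ / ‖x‖ + |‖y‖ - ‖x‖| / ‖x‖ := by rw [h1, h2]
    _ ≤ ‖x - y‖ / ‖x‖ + ‖x - y‖ / ‖x‖ := by gcongr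
    _ = 2 * ‖x - y‖ / ‖x‖ := by ring
    _ ≤ 4 * ‖x - y‖ / (‖x‖ + ‖y‖) := by
        rw [div_le_div_iff₀ hxn (by positivity)]
        nlinarith [norm_nonneg (x - y)]

theorem stmt_18 {X : Type*} [NormedAddCommGroup X] [NormedSpace ℝ X]
    (x y : X) (hx : x ≠ 0) (hy : y ≠ 0) :
    ‖(1 / ‖x‖) • x - (1 / ‖y‖) • y‖ ≤ 4 * ‖x - y‖ / (‖x‖ + ‖y‖) := by
  rcases le_total ‖y‖ ‖x‖ with h | h
  · exact dw_aux x y hx hy h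
  · have := dw_aux y x hy hx h
    rwa [norm_sub_rev, norm_sub_rev y x, add_comm ‖y‖] at this
end

section
/- In a real inner product space, for any nonzero vectors x and y, the angular distance satisfies α[x,y] ≤ 2‖x−y‖/(‖x‖+‖y‖). -/
/-!
Put `u = x / ‖x‖`, `v = y / ‖y‖`, `a = ‖x‖`, `b = ‖y‖`. Then
`x - y = ((a + b) / 2) • (u - v) + ((a - b) / 2) • (u + v)`, and since `‖u‖ = ‖v‖` the vectors
`u - v` and `u + v` are orthogonal. Pythagoras gives `‖x - y‖ ≥ (a + b) / 2 * ‖u - v‖`.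
-/

section

variable {X : Type*} [NormedAddCommGroup X] [InnerProductSpace ℝ X]

theorem norm_smul_sub_le_norm_add_smul_add_of_norm_eq {u v : X} (h : ‖u‖ = ‖v‖) (s t : ℝ) :
    ‖s • (u - v)‖ ≤ ‖s • (u - v) + t • (u + v)‖ := by
  have horth : inner ℝ (s • (u - v)) (t • (u + v)) = 0 := by
    rw [real_inner_smul_left, real_inner_smul_right, real_inner_comm,
      (real_inner_add_sub_eq_zero_iff u v).mpr h, mul_zero, mul_zero]
  rw [mul_self_le_mul_self_iff (norm_nonneg _) (norm_nonneg _),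
    norm_add_sq_eq_norm_sq_add_norm_sq_real horth]
  exact le_add_of_nonneg_right (mul_self_nonneg _)

theorem half_add_mul_norm_sub_le_of_norm_eq {u v : X} (h : ‖u‖ = ‖v‖) {a b : ℝ}
    (hab : 0 ≤ a + b) : (a + b) / 2 * ‖u - v‖ ≤ ‖a • u - b • v‖ := by
  have hdecomp : a • u - b • v = ((a + b) / 2) • (u - v) + ((a - b) / 2) • (u + v) := by
    module
  calc (a + b) / 2 * ‖u - v‖ = ‖((a + b) / 2) • (u - v)‖ := by
        rw [norm_smul, Real.norm_of_nonneg (by positivity)]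
    _ ≤ ‖a • u - b • v‖ := hdecomp ▸ norm_smul_sub_le_norm_add_smul_add_of_norm_eq h _ _

end

theorem stmt_19 {X : Type*} [NormedAddCommGroup X] [InnerProductSpace ℝ X]
    (x y : X) (hx : x ≠ 0) (hy : y ≠ 0) :
    ‖(1 / ‖x‖) • x - (1 / ‖y‖) • y‖ ≤ 2 * ‖x - y‖ / (‖x‖ + ‖y‖) := by
  have hsum : 0 < ‖x‖ + ‖y‖ := add_pos (norm_pos_iff.mpr hx) (norm_pos_iff.mpr hy)
  have hunit : ‖(1 / ‖x‖) • x‖ = ‖(1 / ‖y‖) • y‖ := by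
    rw [one_div, one_div]
    exact (norm_smul_inv_norm (𝕜 := ℝ) hx).trans (norm_smul_inv_norm (𝕜 := ℝ) hy).symm
  have hhalf := half_add_mul_norm_sub_le_of_norm_eq hunit hsum.le
  rw [smul_smul, smul_smul, mul_one_div_cancel (norm_ne_zero_iff.mpr hx),
    mul_one_div_cancel (norm_ne_zero_iff.mpr hy), one_smul, one_smul] at hhalf
  rw [le_div_iff₀ hsum]
  linarith
end
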